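/- Instability of the explicit soliton: let p ≥ 1 be an integer, g < 0, and a > 0 satisfy π/4 + g·a^{2p} = 0, and consider the nonlinear quantum walk with coin C(s₁,s₂) = R(π/4 + g(s₁+s₂)^p). For 0 < ε < 1 let φ_ε(0) = a(1−ε)δ_{1,0} and φ_ε(t) = U(t)φ_ε(0). Then for every t ≥ 0, φ_ε(t,−t) has the form (c_t, 0)ᵗ, the edge values satisfy ‖φ_ε(t,−t)‖_{ℂ²} = |cos(π/4 + g‖φ_ε(t−1,−(t−1))‖_{ℂ²}^{2p})| · ‖φ_ε(t−1,−(t−1))‖_{ℂ²} for t ≥ 1, and there exists ε' > 0 (depending only on ε and p) such that ‖φ_ε(t,−t)‖_{ℂ²} ≤ (1−ε')ᵗ a(1−ε) for all t ≥ 0; in particular ‖φ_ε(t,−t)‖_{ℂ²} → 0 as t → ∞. -/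

import Mathlib

noncomputable section

open Filter MeasureTheory
open scoped BigOperators ComplexConjugate

/-- The state space component `ℂ²`. -/
abbrev C2 := EuclideanSpace ℂ (Fin 2)

/-- Operator norm of a `2 × 2` complex matrix acting on `ℂ²`. -/
def matOpNorm (M : Matrix (Fin 2) (Fin 2) ℂ) : ℝ :=
  ‖Matrix.toEuclideanCLM (𝕜 := ℂ) M‖

/-- The vector `(z, w)ᵗ ∈ ℂ²`. -/
def vec2 (z w : ℂ) : C2 := (WithLp.equiv 2 (Fin 2 → ℂ)).symm ![z, w]

/-- Apply a `2 × 2` matrix to a vector in `ℂ²`. -/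
def applyMat (M : Matrix (Fin 2) (Fin 2) ℂ) (v : C2) : C2 :=
  Matrix.toEuclideanCLM (𝕜 := ℂ) M v

/-- The `ℓ^p` norm of a state `u : ℤ → ℂ²`. -/
def lpNorm (p : ℝ) (u : ℤ → C2) : ℝ := (∑' x : ℤ, ‖u x‖ ^ p) ^ (1/p)

/-- The `ℓ^∞` norm of a state. -/
def linfNorm (u : ℤ → C2) : ℝ := ⨆ x : ℤ, ‖u x‖

/-- The constant coin matrix `C₀`. -/
def C0mat (a b : ℂ) : Matrix (Fin 2) (Fin 2) ℂ :=
  !![a, b; -(starRingEnd ℂ) b, (starRingEnd ℂ) a]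

/-- The shift `S`: `(Su)(x) = (u₁(x+1), u₂(x−1))ᵗ`. -/
def shiftS (u : ℤ → C2) : ℤ → C2 := fun x => vec2 (u (x+1) 0) (u (x-1) 1)

/-- The (nonlinear) coin operator `Ĉ`: `(Ĉu)(x) = C(|u₁(x)|², |u₂(x)|²) u(x)`. -/
def coinApply (C : ℝ → ℝ → Matrix (Fin 2) (Fin 2) ℂ) (u : ℤ → C2) : ℤ → C2 :=
  fun x => applyMat (C (‖u x 0‖^2) (‖u x 1‖^2)) (u x)

/-- One step of a quantum walk with coin map `C`: `U = S ∘ Ĉ`. -/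
def genStep (C : ℝ → ℝ → Matrix (Fin 2) (Fin 2) ℂ) (u : ℤ → C2) : ℤ → C2 :=
  shiftS (coinApply C u)

/-- The `t`-step evolution of a quantum walk with coin map `C`. -/
def genEvolve (C : ℝ → ℝ → Matrix (Fin 2) (Fin 2) ℂ) (t : ℕ) (u0 : ℤ → C2) : ℤ → C2 :=
  (genStep C)^[t] u0

/-- One step of the linear walk `U₀ = S ∘ Ĉ₀`. -/
def U0step (a b : ℂ) : (ℤ → C2) → (ℤ → C2) := genStep (fun _ _ => C0mat a b)

/-- The linear evolution `U₀ᵗ`. -/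
def linEvolve (a b : ℂ) (t : ℕ) (u0 : ℤ → C2) : ℤ → C2 := (U0step a b)^[t] u0

/-- The inverse linear step `U₀⁻¹ = Ĉ₀⁻¹ ∘ S⁻¹`. -/
def U0inv (a b : ℂ) (u : ℤ → C2) : ℤ → C2 :=
  fun x => applyMat (Matrix.conjTranspose (C0mat a b)) (vec2 (u (x-1) 0) (u (x+1) 1))

/-- The full nonlinear coin `C(s₁,s₂) = C₀ · C_N(s₁,s₂)`. -/
def nlCoin (a b : ℂ) (CN : ℝ → ℝ → Matrix (Fin 2) (Fin 2) ℂ) :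
    ℝ → ℝ → Matrix (Fin 2) (Fin 2) ℂ :=
  fun s₁ s₂ => C0mat a b * CN s₁ s₂

/-- The nonlinear quantum walk `U(t)u₀` with coin `C = C₀ C_N`. -/
def nlEvolve (a b : ℂ) (CN : ℝ → ℝ → Matrix (Fin 2) (Fin 2) ℂ) (t : ℕ) (u0 : ℤ → C2) :
    ℤ → C2 :=
  genEvolve (nlCoin a b CN) t u0

/-- `U(t)u₀` scatters: there is `u₊ ∈ ℓ²` with `‖U(t)u₀ − U₀ᵗu₊‖_{ℓ²} → 0`. -/
def scatters (a b : ℂ) (CN : ℝ → ℝ → Matrix (Fin 2) (Fin 2) ℂ) (u0 : ℤ → C2) : Prop :=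
  ∃ uplus : ℤ → C2, Summable (fun x => ‖uplus x‖ ^ (2:ℝ)) ∧
    Tendsto (fun t : ℕ =>
        lpNorm 2 (fun x => nlEvolve a b CN t u0 x - linEvolve a b t uplus x))
      atTop (nhds 0)

/-- Japanese bracket `⟨t⟩ = (1+t²)^{1/2}`. -/
def jap (t : ℕ) : ℝ := Real.sqrt (1 + (t:ℝ)^2)

/-- Discrete Fourier transform `(Fu)(ξ) = Σ_x e^{−ixξ} u(x)`. -/
def dFourier (u : ℤ → C2) (ξ : ℝ) : C2 :=
  ∑' x : ℤ, Complex.exp (-(Complex.I) * (x:ℂ) * (ξ:ℂ)) • u x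

/-- `w(ξ) = Re(e^{iξ}a)`. -/
def wfun (a : ℂ) (ξ : ℝ) : ℝ := (Complex.exp (Complex.I * (ξ:ℂ)) * a).re

/-- `λ₊(ξ) = w(ξ) + i√(1−w(ξ)²)`. -/
def lamPlus (a : ℂ) (ξ : ℝ) : ℂ :=
  (wfun a ξ : ℂ) + Complex.I * ((Real.sqrt (1 - (wfun a ξ)^2) : ℝ) : ℂ)

/-- `λ₋(ξ) = w(ξ) − i√(1−w(ξ)²)`. -/
def lamMinus (a : ℂ) (ξ : ℝ) : ℂ :=
  (wfun a ξ : ℂ) - Complex.I * ((Real.sqrt (1 - (wfun a ξ)^2) : ℝ) : ℂ)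

/-- The diagonalizing matrix `P(ξ)`. -/
def Pmat (a b : ℂ) (ξ : ℝ) : Matrix (Fin 2) (Fin 2) ℂ :=
  (((‖b‖^2 + ‖Complex.exp (Complex.I * (ξ:ℂ)) * a - lamPlus a ξ‖^2 : ℝ) : ℂ))⁻¹ •
    !![ -Complex.exp (-(Complex.I) * (ξ:ℂ)) * (starRingEnd ℂ) b,
          -Complex.exp (-(Complex.I) * (ξ:ℂ)) * a + lamMinus a ξ;
        -Complex.exp (Complex.I * (ξ:ℂ)) * a + lamPlus a ξ,
          -Complex.exp (Complex.I * (ξ:ℂ)) * b ]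

/-- `Q₊(ξ)` (for `sgn = true`) and `Q₋(ξ)` (for `sgn = false`). -/
def Qpm (a b : ℂ) (sgn : Bool) (ξ : ℝ) : Matrix (Fin 2) (Fin 2) ℂ :=
  (Pmat a b (ξ - Complex.arg a))⁻¹ *
    (if sgn then !![1,0;0,0] else !![0,0;0,1]) * Pmat a b (ξ - Complex.arg a)

/-- `p(ξ) = arccos(|a| cos ξ)`. -/
def pfun (a : ℂ) (ξ : ℝ) : ℝ := Real.arccos (‖a‖ * Real.cos ξ)

/-- `p'(ξ) = |a| sin ξ / √(1 − |a|² cos² ξ)`. -/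
def pderiv (a : ℂ) (ξ : ℝ) : ℝ :=
  ‖a‖ * Real.sin ξ / Real.sqrt (1 - ‖a‖^2 * (Real.cos ξ)^2)

/-- The Konno function `f_K(v;r)`. -/
def konno (r v : ℝ) : ℝ :=
  if |v| < r then Real.sqrt (1 - r^2) / (Real.pi * (1 - v^2) * Real.sqrt (r^2 - v^2)) else 0

/-- `ξ_{±,m}(v) = mπ + arcsin(∓(−1)^m |b| v /(|a|√(1−v²)))`; `sgn = true` is `+`. -/
def xiPM (a b : ℂ) (sgn : Bool) (m : ℕ) (v : ℝ) : ℝ :=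
  m * Real.pi +
    Real.arcsin (((if sgn then (-1:ℝ) else 1) * (-1)^m * ‖b‖ * v) / (‖a‖ * Real.sqrt (1 - v^2)))

/-- `P_{±,m}(ξ) = ⟨û₊(ξ−θ_a), Q_±(ξ) û₊(ξ−θ_a)⟩_{ℂ²}`. -/
def PpmVal (a b : ℂ) (uplus : ℤ → C2) (sgn : Bool) (ξ : ℝ) : ℂ :=
  @inner ℂ _ _ (dFourier uplus (ξ - Complex.arg a))
    (applyMat (Qpm a b sgn ξ) (dFourier uplus (ξ - Complex.arg a)))

/-- The weight `w(v)` determined by `u₊`. -/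
def wWeight (a b : ℂ) (uplus : ℤ → C2) (v : ℝ) : ℝ :=
  ((1/2 : ℂ) *
    ((PpmVal a b uplus false (xiPM a b false 0 v) + PpmVal a b uplus false (xiPM a b false 1 v)) +
     (PpmVal a b uplus true (xiPM a b true 0 v) + PpmVal a b uplus true (xiPM a b true 1 v)))).re

/-- The symbol of the asymptotic-velocity multiplier `e^{iξ₀v̂₀}`. -/
def velMultM (a b : ℂ) (ξ0 ξ : ℝ) : Matrix (Fin 2) (Fin 2) ℂ :=
  (Pmat a b ξ)⁻¹ *
    !![Complex.exp (-(Complex.I) * (ξ0:ℂ) * (pderiv a (ξ + Complex.arg a) : ℝ)), 0;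
       0, Complex.exp (Complex.I * (ξ0:ℂ) * (pderiv a (ξ + Complex.arg a) : ℝ))] * Pmat a b ξ

/-- The Fourier multiplier operator `e^{iξ₀v̂₀} = F⁻¹ P⁻¹ diag(e^{∓iξ₀p'}) P F`. -/
def velMult (a b : ℂ) (ξ0 : ℝ) (u : ℤ → C2) : ℤ → C2 := fun x =>
  (2 * Real.pi)⁻¹ •
    ∫ ξ in (0:ℝ)..(2 * Real.pi),
      Complex.exp (Complex.I * (x:ℂ) * (ξ:ℂ)) • applyMat (velMultM a b ξ0 ξ) (dFourier u ξ)

/-- The oscillatory-integral kernel `I_{±,ij}(t,s)`; `sgn = true` is `+`. -/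
def Ikernel (a b : ℂ) (sgn : Bool) (t s : ℝ) (i j : Fin 2) : ℂ :=
  (2 * Real.pi)⁻¹ *
    ∫ ξ in (0:ℝ)..(2 * Real.pi),
      Complex.exp (Complex.I *
        ((t * ((if sgn then pfun a ξ else -pfun a ξ) + s * (ξ - Complex.arg a)) : ℝ) : ℂ)) *
        (Qpm a b sgn ξ i j)

/-- Inner product of `ℋ`, linear in the FIRST argument (as used in Section 4). -/
def herm (u v : ℤ → C2) : ℂ := ∑' x : ℤ, @inner ℂ _ _ (v x) (u x)

/-- The state `δ_{j,x₀}`. -/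
def deltaState (j : Fin 2) (x0 : ℤ) : ℤ → C2 :=
  fun x => if x = x0 then EuclideanSpace.single j (1:ℂ) else 0

/-- `(Ĉ_N − I)u`. -/
def coinDiff (CN : ℝ → ℝ → Matrix (Fin 2) (Fin 2) ℂ) (u : ℤ → C2) : ℤ → C2 :=
  fun x => coinApply CN u x - u x

/-- The wave operator `W* u₀ = u₀ + Σ_{t≥0} U₀^{−t}(Ĉ_N − I)U(t)u₀`. -/
def waveOp (a b : ℂ) (CN : ℝ → ℝ → Matrix (Fin 2) (Fin 2) ℂ) (u0 : ℤ → C2) : ℤ → C2 :=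
  fun x => u0 x + ∑' t : ℕ, ((U0inv a b)^[t] (coinDiff CN (nlEvolve a b CN t u0))) x

/-- The operator `U₀⁻¹ W* U₀ − W*`. -/
def scatOp (a b : ℂ) (CN : ℝ → ℝ → Matrix (Fin 2) (Fin 2) ℂ) (u0 : ℤ → C2) : ℤ → C2 :=
  fun x => U0inv a b (waveOp a b CN (U0step a b u0)) x - waveOp a b CN u0 x

/-- `ℒ_{(i+1)(j+1)}(λ)`. -/
def Lcal (a b : ℂ) (CN : ℝ → ℝ → Matrix (Fin 2) (Fin 2) ℂ) (i j : Fin 2) (lam : ℝ) : ℂ :=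
  ((lam:ℂ)^(10:ℕ))⁻¹ *
    herm (scatOp a b CN (fun x => if x = 0 then
      (if i = 0 then vec2 ((lam:ℂ)^2) ((lam:ℂ)^3) else vec2 ((lam:ℂ)^3) ((lam:ℂ)^2)) else 0))
      (deltaState j 0)

/-- `D_λ g(λ) = λ⁻¹(g(2λ) − g(λ))`. -/
def Dlam (g : ℝ → ℂ) (lam : ℝ) : ℂ := ((lam:ℂ))⁻¹ * (g (2*lam) - g lam)

/-- `l¹_t l²_x` norm. -/
def l1l2 (F : ℕ → ℤ → C2) : ℝ := ∑' t : ℕ, lpNorm 2 (F t)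

/-- `l^{6/5}_t l¹_x` norm. -/
def l65l1 (F : ℕ → ℤ → C2) : ℝ := (∑' t : ℕ, lpNorm 1 (F t) ^ ((6:ℝ)/5)) ^ ((5:ℝ)/6)

/-- `l⁶_t l^∞_x` norm. -/
def l6linf (F : ℕ → ℤ → C2) : ℝ := (∑' t : ℕ, linfNorm (F t) ^ (6:ℝ)) ^ ((1:ℝ)/6)

/-- `l^∞_t l²_x` norm. -/
def linfl2 (F : ℕ → ℤ → C2) : ℝ := ⨆ t : ℕ, lpNorm 2 (F t)

/-- The Strichartz norm `‖F‖_{Stz} = max(‖F‖_{l^∞l²}, ‖F‖_{l⁶l^∞})`. -/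
def StzNorm (F : ℕ → ℤ → C2) : ℝ := max (linfl2 F) (l6linf F)

/-- The retarded sum `Σ_{s=0}^t U₀^{t−s} f(s)`. -/
def retSum (a b : ℂ) (f : ℕ → ℤ → C2) (t : ℕ) : ℤ → C2 :=
  fun x => ∑ s ∈ Finset.range (t+1), linEvolve a b (t - s) (f s) x

/-- The rotation matrix `R(θ)`. -/
def rotMat (θ : ℝ) : Matrix (Fin 2) (Fin 2) ℂ :=
  !![((Real.cos θ : ℝ) : ℂ), -((Real.sin θ : ℝ) : ℂ);
     ((Real.sin θ : ℝ) : ℂ), ((Real.cos θ : ℝ) : ℂ)]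

/-!
On the left edge `x = -t` of the light cone only the first component survives: the shift moves
first components to the left and second components to the right, so the edge value after one more
step is the `(0,0)` entry of the coin times the current edge value, i.e. `c_{t+1} = cos θ_t · c_t`
with `θ_t = π/4 + g |c_t|^{2p}`. The resonance condition `π/4 + g a^{2p} = 0` turns the angle into
`θ_t = π/4 · (1 - (|c_t|/a)^{2p})`. As long as `|c_t| ≤ a(1-ε)` this lies in `[δ, π/4]` with
`δ = π/4 · (1 - (1-ε)^{2p}) > 0`, so every step contracts `|c_t|` by the factor `cos δ < 1`.
-/

lemma applyMat_vec2 (M : Matrix (Fin 2) (Fin 2) ℂ) (z w : ℂ) :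
    applyMat M (vec2 z w) = vec2 (M 0 0 * z + M 0 1 * w) (M 1 0 * z + M 1 1 * w) := by
  ext i
  fin_cases i <;> simp [applyMat, vec2]

lemma vec2_zero_zero : vec2 0 0 = 0 := by
  ext i; fin_cases i <;> simp [vec2]

lemma norm_vec2_zero (z : ℂ) : ‖vec2 z 0‖ = ‖z‖ := by
  simp [vec2, EuclideanSpace.norm_eq, Fin.sum_univ_two]

section LeftEdge

variable (C : ℝ → ℝ → Matrix (Fin 2) (Fin 2) ℂ)

def edgeSeq (c : ℂ) : ℕ → ℂ
  | 0 => c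
  | t + 1 => C (‖edgeSeq c t‖ ^ 2) 0 0 0 * edgeSeq c t

lemma genEvolve_succ (t : ℕ) (u0 : ℤ → C2) :
    genEvolve C (t + 1) u0 = genStep C (genEvolve C t u0) :=
  Function.iterate_succ_apply' _ _ _

lemma genStep_leftEdge {u : ℤ → C2} {n : ℤ} {c : ℂ} (hu : ∀ x < n, u x = 0)
    (hn : u n = vec2 c 0) :
    (∀ x < n - 1, genStep C u x = 0) ∧
      genStep C u (n - 1) = vec2 (C (‖c‖ ^ 2) 0 0 0 * c) 0 := by
  have hcoin : ∀ x < n, coinApply C u x = 0 := fun x hx => by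
    simp only [coinApply, hu x hx, map_zero, applyMat]
  refine ⟨fun x hx => ?_, ?_⟩
  · show vec2 (coinApply C u (x + 1) 0) (coinApply C u (x - 1) 1) = 0
    rw [hcoin _ (by omega), hcoin _ (by omega)]
    exact vec2_zero_zero
  · show vec2 (coinApply C u (n - 1 + 1) 0) (coinApply C u (n - 1 - 1) 1) = _
    rw [sub_add_cancel, hcoin (n - 1 - 1) (by omega), coinApply, hn, applyMat_vec2]
    simp [vec2]

lemma genEvolve_leftEdge {u0 : ℤ → C2} {c : ℂ} (hu0 : ∀ x < 0, u0 x = 0)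
    (h0 : u0 0 = vec2 c 0) (t : ℕ) :
    (∀ x < -(t : ℤ), genEvolve C t u0 x = 0) ∧
      genEvolve C t u0 (-(t : ℤ)) = vec2 (edgeSeq C c t) 0 := by
  induction t with
  | zero => exact ⟨by simpa [genEvolve] using hu0, by simpa [genEvolve, edgeSeq] using h0⟩
  | succ t ih =>
    have hcast : -((t + 1 : ℕ) : ℤ) = -(t : ℤ) - 1 := by push_cast; ring
    rw [genEvolve_succ, hcast]
    exact genStep_leftEdge C ih.1 ih.2

end LeftEdge

lemma norm_edgeSeq_rotMat_succ (p : ℕ) (g : ℝ) (c : ℂ) (t : ℕ) :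
    ‖edgeSeq (fun s₁ s₂ => rotMat (Real.pi/4 + g*(s₁+s₂)^p)) c (t + 1)‖ =
      |Real.cos (Real.pi/4 + g *
        ‖edgeSeq (fun s₁ s₂ => rotMat (Real.pi/4 + g*(s₁+s₂)^p)) c t‖ ^ (2*p))| *
        ‖edgeSeq (fun s₁ s₂ => rotMat (Real.pi/4 + g*(s₁+s₂)^p)) c t‖ := by
  rw [edgeSeq, norm_mul, add_zero, ← pow_mul]
  simp only [rotMat, Matrix.of_apply, Matrix.cons_val', Matrix.cons_val_zero,
    Matrix.empty_val', Matrix.cons_val_fin_one, Complex.norm_real, Real.norm_eq_abs]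

lemma abs_cos_pi_div_four_mul_le (n : ℕ) {x y : ℝ} (hx : 0 ≤ x) (hxy : x ≤ y) (hy : y ≤ 1) :
    |Real.cos (Real.pi/4 * (1 - x ^ n))| ≤ Real.cos (Real.pi/4 * (1 - y ^ n)) := by
  have hyn : y ^ n ≤ 1 := pow_le_one₀ (hx.trans hxy) hy
  have hxyn : x ^ n ≤ y ^ n := pow_le_pow_left₀ hx hxy n
  have hxn : 0 ≤ x ^ n := pow_nonneg hx n
  have hπ := Real.pi_pos
  rw [abs_of_nonneg (Real.cos_nonneg_of_mem_Icc ⟨by nlinarith, by nlinarith⟩)]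
  exact Real.cos_le_cos_of_nonneg_of_le_pi (by nlinarith) (by nlinarith) (by nlinarith)

lemma cos_pi_div_four_mul_one_sub_pow_mem_Ico {n : ℕ} (hn : n ≠ 0) {y : ℝ} (hy0 : 0 ≤ y)
    (hy1 : y < 1) : Real.cos (Real.pi/4 * (1 - y ^ n)) ∈ Set.Ico 0 1 := by
  have h1 : y ^ n < 1 := pow_lt_one₀ hy0 hy1 hn
  have h0 : 0 ≤ y ^ n := pow_nonneg hy0 n
  have hπ := Real.pi_pos
  refine ⟨Real.cos_nonneg_of_mem_Icc ⟨by nlinarith, by nlinarith⟩, ?_⟩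
  simpa using Real.cos_lt_cos_of_nonneg_of_le_pi le_rfl (by nlinarith) (by nlinarith)

lemma le_pow_mul_of_step_le {r : ℕ → ℝ} {k : ℝ} (hk0 : 0 ≤ k) (hk1 : k ≤ 1) (hr0 : 0 ≤ r 0)
    (hstep : ∀ t, r t ≤ r 0 → r (t + 1) ≤ k * r t) (t : ℕ) : r t ≤ k ^ t * r 0 := by
  induction t with
  | zero => simp
  | succ t ih =>
    have hle : r t ≤ r 0 := ih.trans (mul_le_of_le_one_left hr0 (pow_le_one₀ hk0 hk1))
    calc r (t + 1) ≤ k * r t := hstep t hle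
      _ ≤ k * (k ^ t * r 0) := mul_le_mul_of_nonneg_left ih hk0
      _ = k ^ (t + 1) * r 0 := by ring

lemma le_geometric_of_resonant_recursion (p : ℕ) {g a : ℝ} (ha : 0 < a)
    (hres : Real.pi/4 + g * a^(2*p) = 0) {r : ℕ → ℝ} (hnn : ∀ t, 0 ≤ r t) (hra : r 0 ≤ a)
    (hrec : ∀ t, r (t + 1) = |Real.cos (Real.pi/4 + g * r t ^ (2*p))| * r t) (t : ℕ) :
    r t ≤ Real.cos (Real.pi/4 * (1 - (r 0 / a) ^ (2*p))) ^ t * r 0 := by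
  have hangle : ∀ s, Real.pi/4 + g * s ^ (2*p) = Real.pi/4 * (1 - (s / a) ^ (2*p)) := by
    intro s
    have hg : g = -(Real.pi/4) / a ^ (2*p) := by field_simp; linarith
    rw [hg, div_pow]
    ring
  have hy1 : r 0 / a ≤ 1 := (div_le_one ha).2 hra
  have hy0 : 0 ≤ r 0 / a := div_nonneg (hnn 0) ha.le
  refine le_pow_mul_of_step_le ?_ (Real.cos_le_one _) (hnn 0) (fun s hs => ?_) t
  · simpa using (abs_cos_pi_div_four_mul_le (2*p) hy0 le_rfl hy1).trans' (abs_nonneg _)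
  · rw [hrec, hangle]
    exact mul_le_mul_of_nonneg_right (abs_cos_pi_div_four_mul_le (2*p)
      (div_nonneg (hnn s) ha.le) (div_le_div_of_nonneg_right hs ha.le) hy1) (hnn s)

theorem soliton_instability_general
    (p : ℕ) (hp : 1 ≤ p) (g : ℝ) (a : ℝ) (ha : 0 < a)
    (hres : Real.pi/4 + g * a^(2*p) = 0)
    (ε : ℝ) (hε0 : 0 < ε) (hε1 : ε < 1) :
    (∀ t : ℕ,
      (genEvolve (fun s₁ s₂ => rotMat (Real.pi/4 + g*(s₁+s₂)^p)) t
        (fun x : ℤ => if x = 0 then vec2 ((a*(1-ε) : ℝ) : ℂ) 0 else 0)) (-(t:ℤ)) 1 = 0) ∧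
    (∀ s : ℕ,
      ‖(genEvolve (fun s₁ s₂ => rotMat (Real.pi/4 + g*(s₁+s₂)^p)) (s+1)
          (fun x : ℤ => if x = 0 then vec2 ((a*(1-ε) : ℝ) : ℂ) 0 else 0)) (-((s:ℤ)+1))‖ =
        |Real.cos (Real.pi/4 + g *
          ‖(genEvolve (fun s₁ s₂ => rotMat (Real.pi/4 + g*(s₁+s₂)^p)) s
              (fun x : ℤ => if x = 0 then vec2 ((a*(1-ε) : ℝ) : ℂ) 0 else 0)) (-(s:ℤ))‖^(2*p))| *
        ‖(genEvolve (fun s₁ s₂ => rotMat (Real.pi/4 + g*(s₁+s₂)^p)) s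
            (fun x : ℤ => if x = 0 then vec2 ((a*(1-ε) : ℝ) : ℂ) 0 else 0)) (-(s:ℤ))‖) ∧
    (∃ ε' > (0:ℝ), ∀ t : ℕ,
      ‖(genEvolve (fun s₁ s₂ => rotMat (Real.pi/4 + g*(s₁+s₂)^p)) t
          (fun x : ℤ => if x = 0 then vec2 ((a*(1-ε) : ℝ) : ℂ) 0 else 0)) (-(t:ℤ))‖ ≤
        (1-ε')^t * (a*(1-ε))) ∧
    Tendsto (fun t : ℕ =>
      ‖(genEvolve (fun s₁ s₂ => rotMat (Real.pi/4 + g*(s₁+s₂)^p)) t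
          (fun x : ℤ => if x = 0 then vec2 ((a*(1-ε) : ℝ) : ℂ) 0 else 0)) (-(t:ℤ))‖)
      atTop (nhds 0) := by
  set C : ℝ → ℝ → Matrix (Fin 2) (Fin 2) ℂ := fun s₁ s₂ => rotMat (Real.pi/4 + g*(s₁+s₂)^p)
  set u0 : ℤ → C2 := fun x : ℤ => if x = 0 then vec2 ((a*(1-ε) : ℝ) : ℂ) 0 else 0
  set c : ℂ := ((a*(1-ε) : ℝ) : ℂ)
  have hc : ‖c‖ = a*(1-ε) := by
    rw [Complex.norm_real, Real.norm_eq_abs, abs_of_pos (mul_pos ha (by linarith))]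
  have hedge (t : ℕ) : genEvolve C t u0 (-(t:ℤ)) = vec2 (edgeSeq C c t) 0 :=
    (genEvolve_leftEdge C (fun x hx => if_neg hx.ne) (if_pos rfl) t).2
  have hnorm (t : ℕ) : ‖genEvolve C t u0 (-(t:ℤ))‖ = ‖edgeSeq C c t‖ := by
    rw [hedge, norm_vec2_zero]
  set k := Real.cos (Real.pi/4 * (1 - (1-ε) ^ (2*p)))
  have hdecay (t : ℕ) : ‖edgeSeq C c t‖ ≤ k ^ t * (a*(1-ε)) := by
    have h := le_geometric_of_resonant_recursion p ha hres (r := fun t => ‖edgeSeq C c t‖)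
      (fun _ => norm_nonneg _) (by simp only [edgeSeq, hc]; nlinarith)
      (norm_edgeSeq_rotMat_succ p g c) t
    simpa only [edgeSeq, hc, mul_div_cancel_left₀ _ ha.ne'] using h
  obtain ⟨hk0, hk1⟩ : k ∈ Set.Ico 0 1 :=
    cos_pi_div_four_mul_one_sub_pow_mem_Ico (by omega) (by linarith) (by linarith)
  refine ⟨fun t => by rw [hedge]; rfl, fun s => ?_, ⟨1 - k, by linarith [hk1], fun t => ?_⟩, ?_⟩
  · have hcast : -((s:ℤ)+1) = -((s+1 : ℕ) : ℤ) := by push_cast; ring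
    rw [hcast, hnorm, hnorm, norm_edgeSeq_rotMat_succ]
  · rw [hnorm, sub_sub_cancel]
    exact hdecay t
  · have hgeom : Tendsto (fun t : ℕ => k ^ t * (a*(1-ε))) atTop (nhds 0) := by
      simpa using (tendsto_pow_atTop_nhds_zero_of_lt_one hk0 hk1).mul_const (a*(1-ε))
    exact squeeze_zero (fun _ => norm_nonneg _) (fun t => (hnorm t).trans_le (hdecay t)) hgeom

/-- instability of the explicit soliton — the perturbed initial datum
`a(1−ε)δ_{1,0}` keeps the form `(c_t,0)ᵗ` at the left edge `x = −t`, satisfies the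
edge recursion, and its edge values decay geometrically to `0`. -/
theorem soliton_instability
    (p : ℕ) (hp : 1 ≤ p) (g : ℝ) (hg : g < 0) (a : ℝ) (ha : 0 < a)
    (hres : Real.pi/4 + g * a^(2*p) = 0)
    (ε : ℝ) (hε0 : 0 < ε) (hε1 : ε < 1) :
    (∀ t : ℕ,
      (genEvolve (fun s₁ s₂ => rotMat (Real.pi/4 + g*(s₁+s₂)^p)) t
        (fun x : ℤ => if x = 0 then vec2 ((a*(1-ε) : ℝ) : ℂ) 0 else 0)) (-(t:ℤ)) 1 = 0) ∧
    (∀ s : ℕ,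
      ‖(genEvolve (fun s₁ s₂ => rotMat (Real.pi/4 + g*(s₁+s₂)^p)) (s+1)
          (fun x : ℤ => if x = 0 then vec2 ((a*(1-ε) : ℝ) : ℂ) 0 else 0)) (-((s:ℤ)+1))‖ =
        |Real.cos (Real.pi/4 + g *
          ‖(genEvolve (fun s₁ s₂ => rotMat (Real.pi/4 + g*(s₁+s₂)^p)) s
              (fun x : ℤ => if x = 0 then vec2 ((a*(1-ε) : ℝ) : ℂ) 0 else 0)) (-(s:ℤ))‖^(2*p))| *
        ‖(genEvolve (fun s₁ s₂ => rotMat (Real.pi/4 + g*(s₁+s₂)^p)) s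
            (fun x : ℤ => if x = 0 then vec2 ((a*(1-ε) : ℝ) : ℂ) 0 else 0)) (-(s:ℤ))‖) ∧
    (∃ ε' > (0:ℝ), ∀ t : ℕ,
      ‖(genEvolve (fun s₁ s₂ => rotMat (Real.pi/4 + g*(s₁+s₂)^p)) t
          (fun x : ℤ => if x = 0 then vec2 ((a*(1-ε) : ℝ) : ℂ) 0 else 0)) (-(t:ℤ))‖ ≤
        (1-ε')^t * (a*(1-ε))) ∧
    Tendsto (fun t : ℕ =>
      ‖(genEvolve (fun s₁ s₂ => rotMat (Real.pi/4 + g*(s₁+s₂)^p)) t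
          (fun x : ℤ => if x = 0 then vec2 ((a*(1-ε) : ℝ) : ℂ) 0 else 0)) (-(t:ℤ))‖)
      atTop (nhds 0) :=
  soliton_instability_general p hp g a ha hres ε hε0 hε1
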